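/- Let ψ : ℝⁿ → [0,∞) be integrable and bounded by 1. Then the fourfold integral Z(m) = ∫_{(0,m)^{4n}} ψ^r(x−y) ψ^r(w−z) ψ^{q−r}(x−w) ψ^{q−r}(y−z) dx dy dw dz satisfies Z(m) ≤ C m^n for a constant C independent of m, for any integers 1 ≤ r ≤ q−1. -/

import Mathlib

open MeasureTheory

/-- The fourfold integral `Z(m)` over the cube `(0,m)^n` of
`ψ^r(x−y) ψ^r(w−z) ψ^{q−r}(x−w) ψ^{q−r}(y−z)` is bounded by `C·mⁿ` with `C` independent of `m`. -/
theorem fourfold_integral_bound {n : ℕ} (ψ : (Fin n → ℝ) → ℝ) (hint : Integrable ψ)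
    (h0 : ∀ x, 0 ≤ ψ x) (h1 : ∀ x, ψ x ≤ 1) (q r : ℕ) (hq : 2 ≤ q) (hr1 : 1 ≤ r)
    (hr2 : r ≤ q - 1) :
    ∃ C : ℝ, ∀ m : ℝ, 0 < m →
      (∫ x in Set.univ.pi fun _ : Fin n => Set.Ioo (0 : ℝ) m,
        ∫ y in Set.univ.pi fun _ : Fin n => Set.Ioo (0 : ℝ) m,
          ∫ w in Set.univ.pi fun _ : Fin n => Set.Ioo (0 : ℝ) m,
            ∫ z in Set.univ.pi fun _ : Fin n => Set.Ioo (0 : ℝ) m,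
              ψ (x - y) ^ r * ψ (w - z) ^ r * ψ (x - w) ^ (q - r) * ψ (y - z) ^ (q - r))
      ≤ C * m ^ n := by
  set I := ∫ x, ψ x with hIdef
  have hI : 0 ≤ I := integral_nonneg h0
  refine ⟨I ^ 3, fun m hm => ?_⟩
  set S := Set.univ.pi fun _ : Fin n => Set.Ioo (0 : ℝ) m with hS
  have hvol : volume S = ENNReal.ofReal m ^ n := by
    simp [hS, volume_pi_pi, Real.volume_Ioo]
  have hcomp : ∀ a : Fin n → ℝ, Integrable fun z => ψ (a - z) := fun a =>
    ((Measure.measurePreserving_sub_left volume a).integrable_comp hint.aestronglyMeasurable).2 hint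
  have hsub : ∀ a : Fin n → ℝ, (∫ z in S, ψ (a - z)) ≤ I := by
    intro a
    calc (∫ z in S, ψ (a - z)) ≤ ∫ z, ψ (a - z) :=
          setIntegral_le_integral (hcomp a) (Filter.Eventually.of_forall fun z => h0 _)
      _ = I := integral_sub_left_eq_self ψ _ a
  have hq1 : 1 ≤ q - r := by omega
  have hpow : ∀ a, ψ a ^ r ≤ ψ a := fun a => by
    calc ψ a ^ r ≤ ψ a ^ 1 := pow_le_pow_of_le_one (h0 a) (h1 a) hr1
      _ = ψ a := pow_one _
  have hpow' : ∀ a, ψ a ^ (q - r) ≤ ψ a := fun a => by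
    calc ψ a ^ (q - r) ≤ ψ a ^ 1 := pow_le_pow_of_le_one (h0 a) (h1 a) hq1
      _ = ψ a := pow_one _
  have hpow1 : ∀ a, ψ a ^ (q - r) ≤ 1 := fun a => pow_le_one₀ (h0 a) (h1 a)
  -- innermost bound
  have hz : ∀ x y w : Fin n → ℝ,
      (∫ z in S, ψ (x - y) ^ r * ψ (w - z) ^ r * ψ (x - w) ^ (q - r) * ψ (y - z) ^ (q - r))
        ≤ ψ (x - y) * I * ψ (x - w) := by
    intro x y w
    have hgint : Integrable (fun z => ψ (x - y) * ψ (x - w) * ψ (w - z)) (volume.restrict S) :=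
      ((hcomp w).restrict).const_mul _
    calc (∫ z in S, ψ (x - y) ^ r * ψ (w - z) ^ r * ψ (x - w) ^ (q - r) * ψ (y - z) ^ (q - r))
        ≤ ∫ z in S, ψ (x - y) * ψ (x - w) * ψ (w - z) := by
          refine integral_mono_of_nonneg (Filter.Eventually.of_forall fun z => ?_) hgint
            (Filter.Eventually.of_forall fun z => ?_)
          · have := h0 (x - y); have := h0 (w - z); have := h0 (x - w); have := h0 (y - z)
            positivity
          · calc ψ (x - y) ^ r * ψ (w - z) ^ r * ψ (x - w) ^ (q - r) * ψ (y - z) ^ (q - r)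
                ≤ ψ (x - y) * ψ (w - z) * ψ (x - w) * 1 := by
                  have n1 := h0 (x - y); have n2 := h0 (w - z); have n3 := h0 (x - w)
                  gcongr <;> first
                    | exact hpow _ | exact hpow' _ | exact hpow1 _
                    | exact h0 _ | exact pow_nonneg (h0 _) _
              _ = ψ (x - y) * ψ (x - w) * ψ (w - z) := by ring
      _ = ψ (x - y) * ψ (x - w) * ∫ z in S, ψ (w - z) := integral_const_mul _ _
      _ ≤ ψ (x - y) * ψ (x - w) * I :=
          mul_le_mul_of_nonneg_left (hsub w) (mul_nonneg (h0 _) (h0 _))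
      _ = ψ (x - y) * I * ψ (x - w) := by ring
  -- w level
  have hw : ∀ x y : Fin n → ℝ,
      (∫ w in S, ∫ z in S,
          ψ (x - y) ^ r * ψ (w - z) ^ r * ψ (x - w) ^ (q - r) * ψ (y - z) ^ (q - r))
        ≤ I * I * ψ (x - y) := by
    intro x y
    have hgint : Integrable (fun w => ψ (x - y) * I * ψ (x - w)) (volume.restrict S) :=
      ((hcomp x).restrict).const_mul _
    calc (∫ w in S, ∫ z in S,
            ψ (x - y) ^ r * ψ (w - z) ^ r * ψ (x - w) ^ (q - r) * ψ (y - z) ^ (q - r))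
        ≤ ∫ w in S, ψ (x - y) * I * ψ (x - w) := by
          refine integral_mono_of_nonneg (Filter.Eventually.of_forall fun w => ?_) hgint
            (Filter.Eventually.of_forall fun w => hz x y w)
          refine integral_nonneg fun z => ?_
          have := h0 (x - y); have := h0 (w - z); have := h0 (x - w); have := h0 (y - z)
          positivity
      _ = ψ (x - y) * I * ∫ w in S, ψ (x - w) := integral_const_mul _ _
      _ ≤ ψ (x - y) * I * I :=
          mul_le_mul_of_nonneg_left (hsub x) (mul_nonneg (h0 _) hI)
      _ = I * I * ψ (x - y) := by ring
  -- y level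
  have hy : ∀ x : Fin n → ℝ,
      (∫ y in S, ∫ w in S, ∫ z in S,
          ψ (x - y) ^ r * ψ (w - z) ^ r * ψ (x - w) ^ (q - r) * ψ (y - z) ^ (q - r))
        ≤ I ^ 3 := by
    intro x
    have hgint : Integrable (fun y => I * I * ψ (x - y)) (volume.restrict S) :=
      ((hcomp x).restrict).const_mul _
    calc (∫ y in S, ∫ w in S, ∫ z in S,
            ψ (x - y) ^ r * ψ (w - z) ^ r * ψ (x - w) ^ (q - r) * ψ (y - z) ^ (q - r))
        ≤ ∫ y in S, I * I * ψ (x - y) := by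
          refine integral_mono_of_nonneg (Filter.Eventually.of_forall fun y => ?_) hgint
            (Filter.Eventually.of_forall fun y => hw x y)
          refine integral_nonneg fun w => integral_nonneg fun z => ?_
          have := h0 (x - y); have := h0 (w - z); have := h0 (x - w); have := h0 (y - z)
          positivity
      _ = I * I * ∫ y in S, ψ (x - y) := integral_const_mul _ _
      _ ≤ I * I * I := mul_le_mul_of_nonneg_left (hsub x) (mul_nonneg hI hI)
      _ = I ^ 3 := by ring
  -- x level
  have hSfin : volume S < ⊤ := by
    rw [hvol]; exact ENNReal.pow_lt_top ENNReal.ofReal_lt_top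
  have hconst : Integrable (fun _ : Fin n → ℝ => I ^ 3) (volume.restrict S) := by
    exact integrableOn_const hSfin.ne
  calc (∫ x in S, ∫ y in S, ∫ w in S, ∫ z in S,
          ψ (x - y) ^ r * ψ (w - z) ^ r * ψ (x - w) ^ (q - r) * ψ (y - z) ^ (q - r))
      ≤ ∫ _x in S, I ^ 3 := by
        refine integral_mono_of_nonneg (Filter.Eventually.of_forall fun x => ?_) hconst
          (Filter.Eventually.of_forall fun x => hy x)
        refine integral_nonneg fun y => integral_nonneg fun w => integral_nonneg fun z => ?_
        have := h0 (x - y); have := h0 (w - z); have := h0 (x - w); have := h0 (y - z)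
        positivity
    _ = (volume S).toReal * I ^ 3 := by rw [setIntegral_const]; rfl
    _ = I ^ 3 * m ^ n := by
        rw [hvol, ENNReal.toReal_pow, ENNReal.toReal_ofReal hm.le]; ring
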